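/- Let (m_j), (n_j) be the ℓ_1-parameters (m_1 = 2, n_1 = 1, m_{j+1} = m_j^{m_j}, n_{j+1} = 2^{2m_{j+1}} n_j) and fix j ≥ 2. Let 0 < ε < 1/m_j² and let x = Σ_{k∈F} c_k e_k be an (n_j, ε)-basic special convex combination. If f belongs to the minimal subset of c_00(ℕ) that contains ±e_i^* for all i ∈ ℕ and is closed under the operations ((S_{n_i+1}), m_i) for all indices i ≠ j only (i.e., f admits a tree analysis all of whose weights differ from m_j), then |f(x)| < 2/m_j². -/

import Mathlib

/-!
Write `m_i = 2 ^ e_i`. For a functional `f` whose tree analysis avoids the weight `m_j`, the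
coordinates where `|f| > 2⁻ˢ` (for `s ≤ 2 e_j`) form a set in `S_{s (n_{j-1} + 1)}`: this is
proved along the tree analysis, using that `S_b * S_a ⊆ S_{a+b}` and that the Schreier families
are hereditary and spreading. For `s = 2 e_j` the order `2 e_j (n_{j-1} + 1)` is below `n_j - 1`,
so the `(n_j, ε)`-basic special convex combination puts mass `< ε` on that set, while elsewhere
`|f| ≤ 1/m_j²`. Hence `|f(x)| < ε + 1/m_j² < 2/m_j²`.
-/

/-- `E < F` for finite sets of naturals: every element of `E` is less than
every element of `F` (vacuously true if one of them is empty). -/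
def FinsetLT (E F : Finset ℕ) : Prop := ∀ a ∈ E, ∀ b ∈ F, a < b

/-- The convolution `M * N` of two families of finite subsets of `ℕ`: it consists of `∅`
together with all unions `E₁ ∪ … ∪ E_k` where `E₁ < … < E_k` are nonempty sets in `N`
and `{min E₁, …, min E_k} ∈ M`. -/
def SchreierConv (M N : Set (Finset ℕ)) : Set (Finset ℕ) :=
  {E | E = ∅ ∨ ∃ (k : ℕ) (Es : Fin k → Finset ℕ),
    (∀ i, Es i ∈ N) ∧ (∀ i, (Es i).Nonempty) ∧
    (∀ i j : Fin k, i < j → FinsetLT (Es i) (Es j)) ∧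
    (Finset.image (fun i => sInf (↑(Es i) : Set ℕ)) Finset.univ) ∈ M ∧
    E = Finset.univ.biUnion Es}

/-- The first Schreier family `S₁ = {E : #E ≤ min E} ∪ {∅}`. -/
def SchreierOne : Set (Finset ℕ) := {E | ∀ k ∈ E, E.card ≤ k}

/-- The Schreier families: `S₀` = singletons and `∅`, `S₁` as above,
`S_{n+1} = S₁ * S_n`. -/
def Schreier : ℕ → Set (Finset ℕ)
  | 0 => {E | E.card ≤ 1}
  | 1 => SchreierOne
  | n + 2 => SchreierConv SchreierOne (Schreier (n + 1))

/-- The minimum of the support of an element of `c₀₀(ℕ) = ℕ →₀ ℝ`. -/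
noncomputable def minsupp (f : ℕ →₀ ℝ) : ℕ := sInf (↑f.support : Set ℕ)

/-- The maximum of the support of an element of `c₀₀(ℕ)`. -/
noncomputable def maxsupp (f : ℕ →₀ ℝ) : ℕ := f.support.sup id

/-- The action of a functional `f ∈ c₀₀(ℕ)` on a vector `x ∈ c₀₀(ℕ)`:
`f(x) = ∑ₖ f(k)·x(k)`. -/
noncomputable def ev (f x : ℕ →₀ ℝ) : ℝ := ∑ k ∈ f.support, f k * x k

/-- The seminorm induced on `c₀₀(ℕ)` by a set `W` of functionals:
`‖x‖_W = sup {f(x) : f ∈ W}`. -/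
noncomputable def WNorm (W : Set (ℕ →₀ ℝ)) (x : ℕ →₀ ℝ) : ℝ :=
  sSup ((fun f => ev f x) '' W)

/-- A finite sequence of functionals in `c₀₀(ℕ)` is `S_n`-admissible if the supports are
nonempty and successive and the set of minima of the supports belongs to `S_n`. -/
def IsAdmissible (n : ℕ) {d : ℕ} (f : Fin d → (ℕ →₀ ℝ)) : Prop :=
  (∀ l, f l ≠ 0) ∧
  (∀ l l' : Fin d, l < l' → ∀ a ∈ (f l).support, ∀ b ∈ (f l').support, a < b) ∧
  (Finset.image (fun l => minsupp (f l)) Finset.univ) ∈ Schreier n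

/-- The sequence `m₁ = b`, `m_{j+1} = m_j ^ (m_j)` (0-indexed in Lean: `mpar b 0 = m₁`). -/
def mpar (b : ℕ) : ℕ → ℕ
  | 0 => b
  | j + 1 => mpar b j ^ mpar b j

/-- The sequence `n₁ = 1`, `n_{j+1} = 2 ^ (2 m_{j+1}) · n_j` (0-indexed in Lean). -/
def npar (b : ℕ) : ℕ → ℕ
  | 0 => 1
  | j + 1 => 2 ^ (2 * mpar b (j + 1)) * npar b j

/-- The coefficients `(c_k)_{k ∈ F}` of an `(n, ε)`-basic special convex combination
`∑_{k ∈ F} c_k e_k`: a convex combination with `F ∈ S_n` and `∑_{k ∈ G} c_k < ε` for every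
`G ⊆ F` with `G ∈ S_{n-1}`. -/
def IsBSCC (n : ℕ) (ε : ℝ) (F : Finset ℕ) (c : ℕ → ℝ) : Prop :=
  (∀ k ∈ F, 0 ≤ c k) ∧ (∑ k ∈ F, c k) = 1 ∧ F ∈ Schreier n ∧
  ∀ G ⊆ F, G ∈ Schreier (n - 1) → ∑ k ∈ G, c k < ε

/-- The vector `∑_{k ∈ F} c_k e_k ∈ c₀₀(ℕ)`. -/
noncomputable def bvec (F : Finset ℕ) (c : ℕ → ℝ) : ℕ →₀ ℝ :=
  ∑ k ∈ F, c k • (Finsupp.single k 1 : ℕ →₀ ℝ)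

/-- The minimal subset of `c₀₀(ℕ)` containing `±e_i^*` and closed under the operations
`(S_{n_i + 1}, m_i)` for all indices `i ≠ j` only (over the `ℓ₁`-parameters): functionals
admitting a tree analysis all of whose weights differ from `m_j`. -/
inductive WAux1Avoid (j : ℕ) : (ℕ →₀ ℝ) → Prop
  | pos (i : ℕ) : WAux1Avoid j (Finsupp.single i 1)
  | neg (i : ℕ) : WAux1Avoid j (-(Finsupp.single i 1))
  | op (i d : ℕ) (hij : i ≠ j) (g : Fin d → ℕ →₀ ℝ) (hg : ∀ l, WAux1Avoid j (g l))
      (hadm : IsAdmissible (npar 2 i + 1) g) :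
      WAux1Avoid j ((mpar 2 i : ℝ)⁻¹ • ∑ l, g l)

open Finset

section Blocks

variable {d : ℕ}

def Successive (G : Fin d → Finset ℕ) : Prop :=
  ∀ l l' : Fin d, l < l' → FinsetLT (G l) (G l')

/-- Empty blocks are skipped, as their `sInf` is the junk value `0`. -/
noncomputable def blockMins (G : Fin d → Finset ℕ) : Finset ℕ :=
  (univ.filter fun l => (G l).Nonempty).image fun l => sInf (G l : Set ℕ)

lemma mem_blockMins {G : Fin d → Finset ℕ} {x : ℕ} :
    x ∈ blockMins G ↔ ∃ l, (G l).Nonempty ∧ sInf (G l : Set ℕ) = x := by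
  simp [blockMins]

lemma blockMins_of_nonempty {G : Fin d → Finset ℕ} (h : ∀ l, (G l).Nonempty) :
    blockMins G = univ.image fun l => sInf (G l : Set ℕ) := by
  simp [blockMins, h]

lemma blockMins_congr {A B : Fin d → Finset ℕ} (hne : ∀ l, (A l).Nonempty ↔ (B l).Nonempty)
    (hinf : ∀ l, sInf (A l : Set ℕ) = sInf (B l : Set ℕ)) : blockMins A = blockMins B := by
  ext x
  simp only [mem_blockMins, hne, hinf]

lemma nonempty_biUnion_iff_nonempty_blockMins {G : Fin d → Finset ℕ} :
    (univ.biUnion G).Nonempty ↔ (blockMins G).Nonempty := by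
  simp only [Finset.Nonempty, mem_biUnion, mem_univ, true_and, mem_blockMins]
  exact ⟨fun ⟨x, l, hx⟩ => ⟨_, l, ⟨x, hx⟩, rfl⟩, fun ⟨_, l, ⟨x, hx⟩, _⟩ => ⟨x, l, hx⟩⟩

lemma sInf_biUnion_eq_sInf_blockMins (G : Fin d → Finset ℕ) :
    sInf (univ.biUnion G : Set ℕ) = sInf (blockMins G : Set ℕ) := by
  by_cases h : (univ.biUnion G).Nonempty
  swap
  · rw [not_nonempty_iff_eq_empty.1 h,
      not_nonempty_iff_eq_empty.1 (nonempty_biUnion_iff_nonempty_blockMins.not.1 h)]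
  apply le_antisymm
  · obtain ⟨l, hl, hmin⟩ := mem_blockMins.1 (nonempty_biUnion_iff_nonempty_blockMins.1 h).csInf_mem
    rw [← hmin]
    exact Nat.sInf_le (mem_biUnion.2 ⟨l, mem_univ _, hl.csInf_mem⟩)
  · obtain ⟨l, -, hl⟩ := mem_biUnion.1 h.csInf_mem
    exact (Nat.sInf_le (mem_blockMins.2 ⟨l, ⟨_, hl⟩, rfl⟩)).trans (Nat.sInf_le hl)

lemma Successive.mono {A B : Fin d → Finset ℕ} (hB : Successive B) (h : ∀ l, A l ⊆ B l) :
    Successive A :=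
  fun l l' hll' a ha b hb => hB l l' hll' a (h l ha) b (h l' hb)

lemma Successive.sInf_lt {G : Fin d → Finset ℕ} (hG : Successive G) {l l' : Fin d} (h : l < l')
    (hl : (G l).Nonempty) (hl' : (G l').Nonempty) :
    sInf (G l : Set ℕ) < sInf (G l' : Set ℕ) :=
  hG l l' h _ hl.csInf_mem _ hl'.csInf_mem

lemma Successive.lt_of_sInf_lt {G : Fin d → Finset ℕ} (hG : Successive G) {l l' : Fin d}
    {x y : ℕ} (hx : x ∈ G l) (hy : y ∈ G l') (h : sInf (G l : Set ℕ) < sInf (G l' : Set ℕ)) :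
    x < y := by
  rcases lt_trichotomy l l' with hll' | rfl | hll'
  · exact hG l l' hll' x hx y hy
  · exact absurd h (lt_irrefl _)
  · exact absurd h (hG.sInf_lt hll' ⟨y, hy⟩ ⟨x, hx⟩).not_gt

noncomputable def restrictBlocks (G : Fin d → Finset ℕ) (S : Finset ℕ) (l : Fin d) : Finset ℕ :=
  if sInf (G l : Set ℕ) ∈ S then G l else ∅

lemma mem_restrictBlocks {G : Fin d → Finset ℕ} {S : Finset ℕ} {l : Fin d} {x : ℕ} :
    x ∈ restrictBlocks G S l ↔ x ∈ G l ∧ sInf (G l : Set ℕ) ∈ S := by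
  unfold restrictBlocks
  split_ifs <;> simp [*]

lemma blockMins_restrictBlocks (G : Fin d → Finset ℕ) (S : Finset ℕ) :
    blockMins (restrictBlocks G S) = S ∩ blockMins G := by
  ext y
  simp only [mem_inter, mem_blockMins]
  constructor
  · rintro ⟨l, ⟨x, hx⟩, rfl⟩
    obtain ⟨hx, hS⟩ := mem_restrictBlocks.1 hx
    rw [restrictBlocks, if_pos hS]
    exact ⟨hS, l, ⟨x, hx⟩, rfl⟩
  · rintro ⟨hy, l, hl, rfl⟩
    exact ⟨l, by rwa [restrictBlocks, if_pos hy], by rw [restrictBlocks, if_pos hy]⟩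

end Blocks

section SchreierConv

variable {M N P : Set (Finset ℕ)}

lemma mem_schreierConv_of_blockMins {d : ℕ} {G : Fin d → Finset ℕ} (hN : ∀ l, G l ∈ N)
    (hG : Successive G) (hM : blockMins G ∈ M) : univ.biUnion G ∈ SchreierConv M N := by
  set T := univ.filter fun l => (G l).Nonempty
  set e := T.orderIsoOfFin rfl
  have he : ∀ l, (G l).Nonempty → ∃ r, (e r : Fin d) = l := fun l hl =>
    ⟨e.symm ⟨l, mem_filter.2 ⟨mem_univ l, hl⟩⟩, by simp⟩
  refine Or.inr ⟨T.card, fun r => G (e r), fun r => hN _, fun r => (mem_filter.1 (e r).2).2,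
    fun r r' h => hG _ _ (e.strictMono h), ?_, ?_⟩
  · convert hM using 1
    ext x
    simp only [mem_image, mem_univ, true_and, mem_blockMins]
    constructor
    · rintro ⟨r, rfl⟩
      exact ⟨e r, (mem_filter.1 (e r).2).2, rfl⟩
    · rintro ⟨l, hl, rfl⟩
      obtain ⟨r, rfl⟩ := he l hl
      exact ⟨r, rfl⟩
  · ext x
    simp only [mem_biUnion, mem_univ, true_and]
    constructor
    · rintro ⟨l, hx⟩
      obtain ⟨r, rfl⟩ := he l ⟨x, hx⟩
      exact ⟨r, hx⟩
    · rintro ⟨r, hx⟩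
      exact ⟨e r, hx⟩

lemma exists_blockMins_of_mem_schreierConv (hM : ∅ ∈ M) {E : Finset ℕ}
    (hE : E ∈ SchreierConv M N) : ∃ (d : ℕ) (G : Fin d → Finset ℕ),
      (∀ l, G l ∈ N) ∧ Successive G ∧ blockMins G ∈ M ∧ E = univ.biUnion G := by
  rcases hE with rfl | ⟨d, G, hN, hne, hG, hmins, rfl⟩
  · exact ⟨0, Fin.elim0, fun l => l.elim0, fun l => l.elim0, by simpa [blockMins] using hM, by simp⟩
  · exact ⟨d, G, hN, hG, by rwa [blockMins_of_nonempty hne], rfl⟩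

lemma schreierConv_mono_right (h : N ⊆ P) : SchreierConv M N ⊆ SchreierConv M P := by
  rintro E (hE | ⟨d, G, hN, hrest⟩)
  · exact Or.inl hE
  · exact Or.inr ⟨d, G, fun l => h (hN l), hrest⟩

/-- Regroup the `P`-blocks according to the `N`-blocks that their minima form. -/
lemma schreierConv_assoc_subset (hM : ∅ ∈ M) (hP : ∅ ∈ P) :
    SchreierConv (SchreierConv M N) P ⊆ SchreierConv M (SchreierConv N P) := by
  intro E hE
  obtain ⟨d, G, hGP, hG, hmins, rfl⟩ := exists_blockMins_of_mem_schreierConv (Or.inl rfl) hE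
  obtain ⟨p, Ms, hMsN, hMs, hMsM, hcover⟩ := exists_blockMins_of_mem_schreierConv hM hmins
  set H : Fin p → Finset ℕ := fun q => univ.biUnion (restrictBlocks G (Ms q))
  have hrestrict : ∀ q, blockMins (restrictBlocks G (Ms q)) = Ms q := fun q => by
    rw [blockMins_restrictBlocks, inter_eq_left, hcover]
    exact subset_biUnion_of_mem Ms (mem_univ q)
  have hH : ∀ q, H q ∈ SchreierConv N P := fun q => by
    refine mem_schreierConv_of_blockMins (fun l => ?_) (hG.mono fun l x hx =>
      (mem_restrictBlocks.1 hx).1) (by rw [hrestrict]; exact hMsN q)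
    unfold restrictBlocks
    split_ifs
    exacts [hGP l, hP]
  have hHsucc : Successive H := by
    intro q q' hqq' x hx y hy
    obtain ⟨l, -, hx⟩ := mem_biUnion.1 hx
    obtain ⟨l', -, hy⟩ := mem_biUnion.1 hy
    rw [mem_restrictBlocks] at hx hy
    exact hG.lt_of_sInf_lt hx.1 hy.1 (hMs q q' hqq' _ hx.2 _ hy.2)
  have hHmins : blockMins H = blockMins Ms := blockMins_congr
    (fun q => by rw [nonempty_biUnion_iff_nonempty_blockMins, hrestrict])
    (fun q => by rw [sInf_biUnion_eq_sInf_blockMins, hrestrict])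
  have hunion : univ.biUnion G = univ.biUnion H := by
    ext x
    simp only [H, mem_biUnion, mem_univ, true_and, mem_restrictBlocks]
    constructor
    · rintro ⟨l, hx⟩
      have hmin : sInf (G l : Set ℕ) ∈ univ.biUnion Ms := hcover ▸ mem_blockMins.2 ⟨l, ⟨x, hx⟩, rfl⟩
      obtain ⟨q, -, hq⟩ := mem_biUnion.1 hmin
      exact ⟨q, l, hx, hq⟩
    · rintro ⟨q, l, hx, -⟩
      exact ⟨l, hx⟩
  rw [hunion]
  exact mem_schreierConv_of_blockMins hH hHsucc (hHmins ▸ hMsM)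

end SchreierConv

section Spread

/-- `A` is a spread of a subset of `B`: `A = {a₁ < … < aₖ}` and `B ⊇ {b₁ < … < bₖ}` with
`bᵢ ≤ aᵢ`. -/
def IsSpreadOfSubset (A B : Finset ℕ) : Prop :=
  ∃ φ : ℕ → ℕ, Set.MapsTo φ A B ∧ StrictMonoOn φ A ∧ ∀ a ∈ A, φ a ≤ a

lemma isSpreadOfSubset_of_subset {A B : Finset ℕ} (h : A ⊆ B) : IsSpreadOfSubset A B :=
  ⟨id, h, strictMonoOn_id, fun _ _ => le_rfl⟩

lemma IsSpreadOfSubset.mono {A B C : Finset ℕ} (h : IsSpreadOfSubset A B) (hBC : B ⊆ C) :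
    IsSpreadOfSubset A C :=
  let ⟨φ, hmaps, hmono, hle⟩ := h
  ⟨φ, fun _ ha => hBC (hmaps ha), hmono, hle⟩

lemma IsSpreadOfSubset.card_le {A B : Finset ℕ} (h : IsSpreadOfSubset A B) : A.card ≤ B.card :=
  let ⟨φ, hmaps, hmono, _⟩ := h
  card_le_card_of_injOn φ hmaps hmono.injOn

lemma isSpreadOfSubset_image {ι : Type*} [LinearOrder ι] {T : Finset ι} {u v : ι → ℕ}
    (hu : StrictMonoOn u T) (hv : StrictMonoOn v T) (hvu : ∀ l ∈ T, v l ≤ u l) :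
    IsSpreadOfSubset (T.image u) (T.image v) := by
  rcases T.eq_empty_or_nonempty with rfl | ⟨l₀, -⟩
  · exact isSpreadOfSubset_of_subset (by simp)
  have : Nonempty ι := ⟨l₀⟩
  have hinv : ∀ l ∈ T, Function.invFunOn u T (u l) = l := fun l hl =>
    hu.injOn.leftInvOn_invFunOn hl
  refine ⟨v ∘ Function.invFunOn u T, ?_, ?_, ?_⟩
  · intro _ ha
    obtain ⟨l, hl, rfl⟩ := mem_image.1 ha
    simp only [Function.comp_apply, hinv l hl]
    exact mem_image_of_mem v hl
  · intro _ ha _ hb h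
    obtain ⟨l, hl, rfl⟩ := mem_image.1 ha
    obtain ⟨l', hl', rfl⟩ := mem_image.1 hb
    simp only [Function.comp_apply, hinv l hl, hinv l' hl']
    exact hv hl hl' ((hu.lt_iff_lt hl hl').1 h)
  · rintro _ ha
    obtain ⟨l, hl, rfl⟩ := mem_image.1 ha
    simpa only [Function.comp_apply, hinv l hl] using hvu l hl

lemma blockMins_isSpreadOfSubset {d : ℕ} {A B : Fin d → Finset ℕ} (hA : Successive A)
    (hB : Successive B)
    (h : ∀ l, (A l).Nonempty → (B l).Nonempty ∧ sInf (B l : Set ℕ) ≤ sInf (A l : Set ℕ)) :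
    IsSpreadOfSubset (blockMins A) (blockMins B) := by
  set T := univ.filter fun l => (A l).Nonempty
  have hT : ∀ l ∈ T, (A l).Nonempty := fun l hl => (mem_filter.1 hl).2
  refine (isSpreadOfSubset_image (T := T) (fun l hl l' hl' hll' => hA.sInf_lt hll' (hT l hl)
    (hT l' hl')) (fun l hl l' hl' hll' => hB.sInf_lt hll' (h l (hT l hl)).1 (h l' (hT l' hl')).1)
    (fun l hl => (h l (hT l hl)).2)).mono ?_
  rintro _ hx
  obtain ⟨l, hl, rfl⟩ := mem_image.1 hx
  exact mem_blockMins.2 ⟨l, (h l (hT l hl)).1, rfl⟩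

/-- Hereditary and spreading. -/
def IsSpreadClosed (𝒜 : Set (Finset ℕ)) : Prop :=
  ∀ ⦃A B : Finset ℕ⦄, B ∈ 𝒜 → IsSpreadOfSubset A B → A ∈ 𝒜

lemma empty_mem_schreierOne : (∅ : Finset ℕ) ∈ SchreierOne := by
  simp [SchreierOne]

lemma isSpreadClosed_schreierOne : IsSpreadClosed SchreierOne := by
  intro A B hB ⟨φ, hmaps, hmono, hle⟩ a ha
  calc A.card ≤ B.card := IsSpreadOfSubset.card_le ⟨φ, hmaps, hmono, hle⟩
    _ ≤ φ a := hB _ (hmaps ha)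
    _ ≤ a := hle a ha

/-- A spread of a subset of `⋃ Eₗ` is split along the preimages of the blocks `Eₗ`. -/
lemma IsSpreadClosed.schreierConv {M N : Set (Finset ℕ)} (hM : IsSpreadClosed M)
    (hN : IsSpreadClosed N) (hM0 : ∅ ∈ M) : IsSpreadClosed (SchreierConv M N) := by
  intro A E hE ⟨φ, hmaps, hmono, hle⟩
  obtain ⟨d, Es, hEsN, hEs, hmins, rfl⟩ := exists_blockMins_of_mem_schreierConv hM0 hE
  set As : Fin d → Finset ℕ := fun l => A.filter (φ · ∈ Es l)
  have hAs : Successive As := by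
    intro l l' hll' a ha b hb
    simp only [As, mem_filter] at ha hb
    exact (hmono.lt_iff_lt ha.1 hb.1).1 (hEs l l' hll' _ ha.2 _ hb.2)
  have hAsEs : ∀ l, (As l).Nonempty →
      (Es l).Nonempty ∧ sInf (Es l : Set ℕ) ≤ sInf (As l : Set ℕ) := by
    intro l hl
    have hmin := mem_filter.1 hl.csInf_mem
    exact ⟨⟨_, hmin.2⟩, (Nat.sInf_le hmin.2).trans (hle _ hmin.1)⟩
  have hA : A = univ.biUnion As := by
    ext a
    simp only [As, mem_biUnion, mem_univ, true_and, mem_filter]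
    refine ⟨fun ha => ?_, fun ⟨_, ha, _⟩ => ha⟩
    obtain ⟨l, -, hl⟩ := mem_biUnion.1 (hmaps ha)
    exact ⟨l, ha, hl⟩
  rw [hA]
  refine mem_schreierConv_of_blockMins (fun l => hN (hEsN l) ⟨φ, fun a ha => (mem_filter.1 ha).2,
    hmono.mono (coe_subset.2 (filter_subset _ _)), fun a ha => hle a (mem_filter.1 ha).1⟩) hAs
    (hM hmins (blockMins_isSpreadOfSubset hAs hEs hAsEs))

end Spread

section Schreier

lemma empty_mem_schreier : ∀ n, (∅ : Finset ℕ) ∈ Schreier n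
  | 0 => by simp [Schreier]
  | 1 => empty_mem_schreierOne
  | _ + 2 => Or.inl rfl

lemma schreier_succ_of_pos {n : ℕ} (hn : 1 ≤ n) :
    Schreier (n + 1) = SchreierConv SchreierOne (Schreier n) := by
  obtain ⟨n, rfl⟩ : ∃ k, n = k + 1 := ⟨n - 1, by omega⟩
  rfl

lemma isSpreadClosed_schreier : ∀ n, IsSpreadClosed (Schreier n)
  | 0 => fun _ _ hB h => h.card_le.trans hB
  | 1 => isSpreadClosed_schreierOne
  | n + 2 => isSpreadClosed_schreierOne.schreierConv (isSpreadClosed_schreier (n + 1))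
      empty_mem_schreierOne

lemma mem_schreier_of_subset {n : ℕ} {A B : Finset ℕ} (hB : B ∈ Schreier n) (h : A ⊆ B) :
    A ∈ Schreier n :=
  isSpreadClosed_schreier n hB (isSpreadOfSubset_of_subset h)

lemma mem_schreierOne_of_card_le_one {E : Finset ℕ} (hE : E.card ≤ 1) (h0 : 0 ∉ E) :
    E ∈ SchreierOne :=
  fun _ hk => hE.trans (Nat.one_le_iff_ne_zero.2 (ne_of_mem_of_not_mem hk h0))

lemma zero_not_mem_schreier {n : ℕ} (hn : 1 ≤ n) {E : Finset ℕ} (hE : E ∈ Schreier n) :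
    0 ∉ E := by
  have hOne : ∀ {E : Finset ℕ}, E ∈ SchreierOne → 0 ∉ E := fun hE h0 =>
    (card_pos.2 ⟨0, h0⟩).not_ge (hE 0 h0)
  obtain ⟨n, rfl⟩ : ∃ k, n = k + 1 := ⟨n - 1, by omega⟩
  rcases n with _ | n
  · exact hOne hE
  obtain ⟨d, G, -, -, hmins, rfl⟩ := exists_blockMins_of_mem_schreierConv empty_mem_schreierOne hE
  intro h0
  obtain ⟨l, -, hl⟩ := mem_biUnion.1 h0
  exact hOne hmins (mem_blockMins.2 ⟨l, ⟨0, hl⟩, Nat.eq_zero_of_le_zero (Nat.sInf_le hl)⟩)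

lemma schreier_subset_succ {n : ℕ} (hn : 1 ≤ n) : Schreier n ⊆ Schreier (n + 1) := by
  intro E hE
  rw [schreier_succ_of_pos hn, show E = univ.biUnion fun _ : Fin 1 => E by simp]
  refine mem_schreierConv_of_blockMins (fun _ => hE) (fun l l' h => absurd h (by omega))
    (mem_schreierOne_of_card_le_one ?_ fun h0 => ?_)
  · exact card_image_le.trans ((card_filter_le _ _).trans (by simp))
  · obtain ⟨_, hl, hmin⟩ := mem_blockMins.1 h0
    exact zero_not_mem_schreier hn hE (hmin ▸ hl.csInf_mem)

lemma schreier_mono {a b : ℕ} (ha : 1 ≤ a) (hab : a ≤ b) : Schreier a ⊆ Schreier b := by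
  induction b, hab using Nat.le_induction with
  | base => exact subset_rfl
  | succ b hb ih => exact ih.trans (schreier_subset_succ (ha.trans hb))

lemma mem_schreier_of_subset_singleton {n i : ℕ} {G : Finset ℕ} (hG : G ⊆ {i}) (h0 : 0 ∉ G) :
    G ∈ Schreier n := by
  rcases subset_singleton_iff.1 hG with rfl | rfl
  · exact empty_mem_schreier n
  have hOne : {i} ∈ SchreierOne := mem_schreierOne_of_card_le_one (by simp) h0
  rcases n with _ | n
  · simp [Schreier]
  · exact schreier_mono le_rfl (by omega) hOne

lemma schreierOne_conv_schreier_zero_subset :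
    SchreierConv SchreierOne (Schreier 0) ⊆ SchreierOne := by
  intro E hE
  obtain ⟨d, G, hG, -, hmins, rfl⟩ := exists_blockMins_of_mem_schreierConv empty_mem_schreierOne hE
  suffices univ.biUnion G = blockMins G by rwa [this]
  ext x
  simp only [mem_biUnion, mem_univ, true_and, mem_blockMins]
  constructor
  · rintro ⟨l, hx⟩
    exact ⟨l, ⟨x, hx⟩, card_le_one.1 (hG l) _ (Finset.Nonempty.csInf_mem ⟨x, hx⟩) _ hx⟩
  · rintro ⟨l, hl, rfl⟩
    exact ⟨l, hl.csInf_mem⟩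

lemma schreierConv_schreier_subset (a : ℕ) {b : ℕ} (hb : 1 ≤ b) :
    SchreierConv (Schreier b) (Schreier a) ⊆ Schreier (a + b) := by
  induction b, hb using Nat.le_induction with
  | base =>
    rcases a with _ | a
    · exact schreierOne_conv_schreier_zero_subset
    · exact subset_rfl
  | succ b hb ih =>
    rw [schreier_succ_of_pos hb, ← add_assoc, schreier_succ_of_pos (by omega)]
    exact (schreierConv_assoc_subset empty_mem_schreierOne (empty_mem_schreier a)).trans
      (schreierConv_mono_right ih)

end Schreier

section Parameters

def epow : ℕ → ℕ
  | 0 => 1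
  | j + 1 => epow j * mpar 2 j

lemma mpar_two_eq_two_pow (j : ℕ) : mpar 2 j = 2 ^ epow j := by
  induction j with
  | zero => rfl
  | succ j ih => rw [mpar, epow, ih, ← pow_mul]

lemma one_le_epow (j : ℕ) : 1 ≤ epow j := by
  induction j with
  | zero => exact le_rfl
  | succ j ih => exact ih.trans (Nat.le_mul_of_pos_right _ (mpar_two_eq_two_pow j ▸ by positivity))

lemma two_mul_epow_le_epow_succ (j : ℕ) : 2 * epow j ≤ epow (j + 1) := by
  rw [epow, mul_comm, mpar_two_eq_two_pow]
  exact Nat.mul_le_mul_left _ (Nat.le_self_pow (Nat.one_le_iff_ne_zero.1 (one_le_epow j)) 2)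

lemma two_mul_epow_le_of_lt {i j : ℕ} (h : j < i) : 2 * epow j ≤ epow i :=
  (two_mul_epow_le_epow_succ j).trans <|
    (monotone_nat_of_le_succ fun k => by have := two_mul_epow_le_epow_succ k; omega) h

lemma one_le_npar (b j : ℕ) : 1 ≤ npar b j := by
  induction j with
  | zero => exact le_rfl
  | succ j ih => exact ih.trans (Nat.le_mul_of_pos_left _ (by positivity))

lemma npar_mono (b : ℕ) : Monotone (npar b) :=
  monotone_nat_of_le_succ fun _ => Nat.le_mul_of_pos_left _ (by positivity)

lemma two_mul_epow_mul_lt_npar (j : ℕ) : 2 * epow (j + 1) * (npar 2 j + 1) < npar 2 (j + 1) := by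
  have hn := one_le_npar 2 j
  have he := Nat.lt_two_pow_self (n := epow (j + 1))
  have hpow : 4 * epow (j + 1) < 2 ^ (2 * mpar 2 (j + 1)) :=
    calc 4 * epow (j + 1) < 2 ^ (epow (j + 1) + 2) := by rw [pow_add]; omega
      _ ≤ 2 ^ (2 * mpar 2 (j + 1)) := by
        rw [mpar_two_eq_two_pow]; exact Nat.pow_le_pow_right two_pos (by omega)
  show _ < 2 ^ (2 * mpar 2 (j + 1)) * npar 2 j
  nlinarith

end Parameters

section Functionals

variable {d : ℕ} {g : Fin d → ℕ →₀ ℝ}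

lemma sum_apply_of_mem_support (hg : Successive fun l => (g l).support) {l : Fin d} {k : ℕ}
    (hk : k ∈ (g l).support) : (∑ l, g l) k = g l k := by
  rw [Finsupp.finsetSum_apply]
  refine sum_eq_single l (fun l' _ hl' => Finsupp.notMem_support_iff.1 fun hk' => ?_) (by simp)
  rcases lt_or_gt_of_ne hl' with h | h
  · exact lt_irrefl k (hg l' l h _ hk' _ hk)
  · exact lt_irrefl k (hg l l' h _ hk _ hk')

lemma exists_sum_apply_eq (hg : Successive fun l => (g l).support) {k : ℕ}
    (hk : (∑ l, g l) k ≠ 0) : ∃ l, (∑ l, g l) k = g l k := by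
  classical
  obtain ⟨l, -, hl⟩ := mem_biUnion.1 (Finsupp.support_finsetSum (Finsupp.mem_support_iff.2 hk))
  exact ⟨l, sum_apply_of_mem_support hg hl⟩

lemma abs_smul_sum_apply_le (hg : Successive fun l => (g l).support) (h1 : ∀ l k, |g l k| ≤ 1)
    {r : ℝ} (hr : 0 ≤ r) (k : ℕ) : |(r • ∑ l, g l) k| ≤ r := by
  rw [Finsupp.smul_apply, smul_eq_mul, abs_mul, abs_of_nonneg hr]
  refine mul_le_of_le_one_right hr ?_
  by_cases hk : (∑ l, g l) k = 0
  · simp [hk]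
  · obtain ⟨l, hl⟩ := exists_sum_apply_eq hg hk
    exact hl ▸ h1 l k

lemma WAux1Avoid.abs_apply_le_one {j : ℕ} {f : ℕ →₀ ℝ} (hf : WAux1Avoid j f) (k : ℕ) :
    |f k| ≤ 1 := by
  induction hf generalizing k with
  | pos i => rw [Finsupp.single_apply]; split <;> simp
  | neg i => rw [Finsupp.neg_apply, abs_neg, Finsupp.single_apply]; split <;> simp
  | op i d _ g _ hadm ih =>
    have hm : (1 : ℝ) ≤ mpar 2 i := by
      rw [mpar_two_eq_two_pow]; push_cast; exact one_le_pow₀ one_le_two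
    exact (abs_smul_sum_apply_le hadm.2.1 ih (by positivity) k).trans (inv_le_one_of_one_le₀ hm)

/-- `0` is left out since `{0}` lies in no `S_n` with `n ≥ 1`. -/
noncomputable def largeCoords (f : ℕ →₀ ℝ) (s : ℕ) : Finset ℕ :=
  open Classical in {k ∈ f.support | 0 < k ∧ ((2 : ℝ) ^ s)⁻¹ < |f k|}

lemma mem_largeCoords {f : ℕ →₀ ℝ} {s k : ℕ} :
    k ∈ largeCoords f s ↔ 0 < k ∧ ((2 : ℝ) ^ s)⁻¹ < |f k| := by
  simp only [largeCoords, mem_filter, Finsupp.mem_support_iff, and_iff_right_iff_imp]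
  exact fun h => abs_pos.1 (lt_trans (by positivity) h.2)

lemma largeCoords_subset_support (f : ℕ →₀ ℝ) (s : ℕ) : largeCoords f s ⊆ f.support :=
  filter_subset _ _

lemma zero_not_mem_largeCoords (f : ℕ →₀ ℝ) (s : ℕ) : 0 ∉ largeCoords f s :=
  fun h => lt_irrefl 0 (mem_largeCoords.1 h).1

lemma largeCoords_eq_empty {f : ℕ →₀ ℝ} {s : ℕ} (h : ∀ k, |f k| ≤ ((2 : ℝ) ^ s)⁻¹) :
    largeCoords f s = ∅ :=
  eq_empty_of_forall_notMem fun k hk => (h k).not_gt (mem_largeCoords.1 hk).2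

lemma largeCoords_smul_sum (hg : Successive fun l => (g l).support) (s e : ℕ) :
    largeCoords (((2 : ℝ) ^ e)⁻¹ • ∑ l, g l) (s + e) =
      univ.biUnion fun l => largeCoords (g l) s := by
  have hscale : ∀ x : ℝ, ((2 : ℝ) ^ (s + e))⁻¹ < ((2 : ℝ) ^ e)⁻¹ * |x| ↔ ((2 : ℝ) ^ s)⁻¹ < |x| :=
    fun x => by rw [pow_add, mul_inv, mul_comm, mul_lt_mul_iff_right₀ (by positivity)]
  ext k
  simp only [mem_largeCoords, mem_biUnion, mem_univ, true_and, Finsupp.smul_apply, smul_eq_mul,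
    abs_mul, abs_inv, abs_pow, abs_two, hscale]
  constructor
  · rintro ⟨hk, hlt⟩
    obtain ⟨l, hl⟩ := exists_sum_apply_eq hg (abs_pos.1 (lt_trans (by positivity) hlt))
    exact ⟨l, hk, hl ▸ hlt⟩
  · rintro ⟨l, hk, hlt⟩
    refine ⟨hk, ?_⟩
    rwa [sum_apply_of_mem_support hg (Finsupp.mem_support_iff.2
      (abs_pos.1 (lt_trans (by positivity) hlt)))]

/-- A weight `m_i = 2 ^ e_i` with `e_i ≥ s` (in particular any `i > j + 1`) pushes every
coordinate below `2⁻ˢ`; any other weight has `i ≤ j` and trades `e_i ≥ 1` halvings of the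
threshold for `n_i + 1 ≤ n_j + 1` Schreier levels. -/
theorem largeCoords_mem_schreier {j : ℕ} {f : ℕ →₀ ℝ} (hf : WAux1Avoid (j + 1) f) {s : ℕ}
    (hs : s ≤ 2 * epow (j + 1)) : largeCoords f s ∈ Schreier (s * (npar 2 j + 1)) := by
  induction hf generalizing s with
  | pos i =>
    exact mem_schreier_of_subset_singleton ((largeCoords_subset_support _ s).trans
      Finsupp.support_single_subset) (zero_not_mem_largeCoords _ s)
  | neg i =>
    refine mem_schreier_of_subset_singleton (i := i) ((largeCoords_subset_support _ s).trans ?_)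
      (zero_not_mem_largeCoords _ s)
    exact Finsupp.support_neg (Finsupp.single i (1 : ℝ)) ▸ Finsupp.support_single_subset
  | op i d hij g hg hadm ih =>
    have hsucc : Successive fun l => (g l).support := hadm.2.1
    rw [mpar_two_eq_two_pow, Nat.cast_pow, Nat.cast_two]
    by_cases hsi : s ≤ epow i
    · rw [largeCoords_eq_empty fun k => (abs_smul_sum_apply_le hsucc
        (fun l => (hg l).abs_apply_le_one) (by positivity) k).trans
        (inv_anti₀ (by positivity) (pow_le_pow_right₀ one_le_two hsi))]
      exact empty_mem_schreier _
    obtain ⟨s, rfl⟩ : ∃ s', s = s' + epow i := ⟨s - epow i, by omega⟩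
    have hi : i ≤ j := by
      by_contra h
      have := two_mul_epow_le_of_lt (show j + 1 < i by omega)
      omega
    have hmins : blockMins (fun l => largeCoords (g l) s) ∈ Schreier (npar 2 i + 1) := by
      refine isSpreadClosed_schreier _ hadm.2.2 ?_
      change IsSpreadOfSubset _ (univ.image fun l => sInf ((g l).support : Set ℕ))
      rw [← blockMins_of_nonempty fun l => Finsupp.support_nonempty_iff.2 (hadm.1 l)]
      refine blockMins_isSpreadOfSubset (hsucc.mono fun l => largeCoords_subset_support _ s) hsucc
        fun l hl => ⟨hl.mono (largeCoords_subset_support _ s),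
          Nat.sInf_le (largeCoords_subset_support _ s hl.csInf_mem)⟩
    rw [largeCoords_smul_sum hsucc]
    refine schreier_mono (by omega) ?_ (schreierConv_schreier_subset _ (by omega)
      (mem_schreierConv_of_blockMins (fun l => ih l (by omega))
        (hsucc.mono fun l => largeCoords_subset_support _ s) hmins))
    have := npar_mono 2 hi
    have := one_le_epow i
    nlinarith

end Functionals

lemma bvec_apply (F : Finset ℕ) (c : ℕ → ℝ) (k : ℕ) :
    bvec F c k = if k ∈ F then c k else 0 := by
  simp only [bvec, Finsupp.finsetSum_apply, Finsupp.smul_apply, Finsupp.single_apply, smul_eq_mul,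
    mul_ite, mul_one, mul_zero]
  exact sum_ite_eq' F k c

lemma ev_bvec (f : ℕ →₀ ℝ) (F : Finset ℕ) (c : ℕ → ℝ) :
    ev f (bvec F c) = ∑ k ∈ F, f k * c k := by
  simp only [ev, bvec_apply, mul_ite, mul_zero, sum_ite_mem]
  refine sum_subset inter_subset_right fun k hkF hk => ?_
  rw [Finsupp.notMem_support_iff.1 fun h => hk (mem_inter.2 ⟨h, hkF⟩), zero_mul]

lemma abs_sum_mul_le_sum_add {ι : Type*} [DecidableEq ι] {F G : Finset ι} {a c : ι → ℝ} {δ : ℝ}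
    (hδ : 0 ≤ δ) (hc : ∀ k ∈ F, 0 ≤ c k) (hsum : ∑ k ∈ F, c k = 1) (ha : ∀ k ∈ F, |a k| ≤ 1)
    (haG : ∀ k ∈ F, k ∉ G → |a k| ≤ δ) : |∑ k ∈ F, a k * c k| ≤ ∑ k ∈ F ∩ G, c k + δ := by
  have hdiff : ∑ k ∈ F \ G, c k ≤ 1 :=
    hsum ▸ sum_le_sum_of_subset_of_nonneg sdiff_subset fun k hk _ => hc k hk
  calc |∑ k ∈ F, a k * c k| ≤ ∑ k ∈ F, |a k| * c k := by
        refine (abs_sum_le_sum_abs _ _).trans (sum_le_sum fun k hk => ?_)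
        rw [abs_mul, abs_of_nonneg (hc k hk)]
    _ = ∑ k ∈ F ∩ G, |a k| * c k + ∑ k ∈ F \ G, |a k| * c k := (sum_inter_add_sum_sdiff F G _).symm
    _ ≤ ∑ k ∈ F ∩ G, c k + ∑ k ∈ F \ G, δ * c k := by
        refine add_le_add (sum_le_sum fun k hk => ?_) (sum_le_sum fun k hk => ?_)
        · exact mul_le_of_le_one_left (hc k (mem_inter.1 hk).1) (ha k (mem_inter.1 hk).1)
        · exact mul_le_mul_of_nonneg_right (haG k (mem_sdiff.1 hk).1 (mem_sdiff.1 hk).2)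
            (hc k (mem_sdiff.1 hk).1)
    _ ≤ ∑ k ∈ F ∩ G, c k + δ := by
        rw [← mul_sum]
        gcongr
        exact mul_le_of_le_one_right hδ hdiff

theorem stmt_17_general (j : ℕ) (hj : 1 ≤ j) (ε : ℝ)
    (hε' : ε < 1 / (mpar 2 j : ℝ) ^ 2)
    (F : Finset ℕ) (c : ℕ → ℝ) (hscc : IsBSCC (npar 2 j) ε F c)
    (f : ℕ →₀ ℝ) (hf : WAux1Avoid j f) :
    |ev f (bvec F c)| < 2 / (mpar 2 j : ℝ) ^ 2 := by
  obtain ⟨j, rfl⟩ : ∃ i, j = i + 1 := ⟨j - 1, by omega⟩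
  obtain ⟨hc, hsum, hF, hsmall⟩ := hscc
  set L := largeCoords f (2 * epow (j + 1))
  have hL : F ∩ L ∈ Schreier (npar 2 (j + 1) - 1) :=
    mem_schreier_of_subset (schreier_mono (Nat.mul_pos (Nat.mul_pos two_pos (one_le_epow _))
      (by omega)) (by have := two_mul_epow_mul_lt_npar j; omega)
      (largeCoords_mem_schreier hf le_rfl)) inter_subset_right
  have hfar : ∀ k ∈ F, k ∉ L → |f k| ≤ ((2 : ℝ) ^ (2 * epow (j + 1)))⁻¹ := fun k hk hkL => by
    rw [mem_largeCoords, not_and, not_lt] at hkL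
    exact hkL (Nat.pos_of_ne_zero (ne_of_mem_of_not_mem hk
      (zero_not_mem_schreier (one_le_npar 2 _) hF)))
  have hδ : ((2 : ℝ) ^ (2 * epow (j + 1)))⁻¹ = 1 / (mpar 2 (j + 1) : ℝ) ^ 2 := by
    rw [mpar_two_eq_two_pow, one_div, mul_comm, pow_mul]
    push_cast
    rfl
  calc |ev f (bvec F c)| ≤ ∑ k ∈ F ∩ L, c k + ((2 : ℝ) ^ (2 * epow (j + 1)))⁻¹ := by
        rw [ev_bvec]
        exact abs_sum_mul_le_sum_add (by positivity) hc hsum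
          (fun k _ => hf.abs_apply_le_one k) hfar
    _ < 2 / (mpar 2 (j + 1) : ℝ) ^ 2 := by
        have := hsmall _ inter_subset_left hL
        rw [hδ]
        linarith [add_div (1 : ℝ) 1 ((mpar 2 (j + 1) : ℝ) ^ 2)]

/-- for `j ≥ 2` (Lean index `j` with `1 ≤ j`), `0 < ε < 1/m_j²` and
`x = ∑_{k ∈ F} c_k e_k` an `(n_j, ε)`-basic special convex combination, every functional
`f` admitting a tree analysis avoiding the weight `m_j` satisfies `|f(x)| < 2/m_j²`. -/
theorem stmt_17 (j : ℕ) (hj : 1 ≤ j) (ε : ℝ) (hε : 0 < ε)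
    (hε' : ε < 1 / (mpar 2 j : ℝ) ^ 2)
    (F : Finset ℕ) (c : ℕ → ℝ) (hscc : IsBSCC (npar 2 j) ε F c)
    (f : ℕ →₀ ℝ) (hf : WAux1Avoid j f) :
    |ev f (bvec F c)| < 2 / (mpar 2 j : ℝ) ^ 2 :=
  stmt_17_general j hj ε hε' F c hscc f hf
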